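/- The tensor rank of the multiplication tensor of the field F_{q^n} viewed as an n-dimensional algebra over F_q is at least 2n − 1. -/

import Mathlib

/-!
Given a decomposition `x * y = ∑ⱼ aⱼ(x) bⱼ(y) zⱼ` of length `R`, pick `n - 1` of the
indices. The corresponding `n - 1` functionals `aⱼ` have a common nonzero zero `x`, and then
`y ↦ x * y = ∑ⱼ aⱼ(x) bⱼ(y) zⱼ` only involves the remaining `R - (n - 1)` vectors `zⱼ`.
In a division algebra left multiplication by `x ≠ 0` is onto, so those vectors span the
`n`-dimensional space, whence `R - (n - 1) ≥ n`.
-/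

/-- The tensor rank of an algebra `(V, ∘)` over `K`: the minimum number `R` of pure tensors
`a^∨ ⊗ b^∨ ⊗ z` summing to its multiplication tensor, i.e. the minimum `R` such that
`x ∘ y = Σ_{j=1}^R a_j(x) b_j(y) z_j` for all `x, y`. -/
noncomputable def algTensorRank {K : Type*} [Field K] {V : Type*} [AddCommGroup V]
    [Module K V] (mul : V →ₗ[K] V →ₗ[K] V) : ℕ :=
  sInf {R | ∃ (a b : Fin R → Module.Dual K V) (z : Fin R → V),
    ∀ x y, mul x y = ∑ j, (a j x * b j y) • z j}

open Module Finset

theorem exists_ne_zero_forall_dual_apply_eq_zero {K V ι : Type*} [Field K] [AddCommGroup V]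
    [Module K V] [FiniteDimensional K V] [Fintype ι] (f : ι → Dual K V)
    (hf : Fintype.card ι < finrank K V) : ∃ x ≠ 0, ∀ i, f i x = 0 := by
  have : LinearMap.ker (LinearMap.pi f) ≠ ⊥ :=
    LinearMap.ker_ne_bot_of_finrank_lt (by rwa [Module.finrank_fintype_fun_eq_card])
  obtain ⟨x, hx, hx0⟩ := (Submodule.ne_bot_iff _).mp this
  exact ⟨x, hx0, fun i => congrFun (LinearMap.mem_ker.mp hx) i⟩

section TensorDecomposition

variable {K V W ι : Type*} [Field K] [AddCommGroup V] [Module K V] [AddCommGroup W] [Module K W]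
  [Fintype ι]

def IsTensorDecomposition (mul : V →ₗ[K] V →ₗ[K] W) (a b : ι → Dual K V) (z : ι → W) : Prop :=
  ∀ x y, mul x y = ∑ j, (a j x * b j y) • z j

theorem IsTensorDecomposition.comp_equiv {ι' : Type*} [Fintype ι'] {mul : V →ₗ[K] V →ₗ[K] W}
    {a b : ι → Dual K V} {z : ι → W} (h : IsTensorDecomposition mul a b z) (e : ι' ≃ ι) :
    IsTensorDecomposition mul (a ∘ e) (b ∘ e) (z ∘ e) := fun x y => by
  rw [h x y, ← e.sum_comp]
  rfl

theorem Module.Basis.isTensorDecomposition {κ : Type*} [Fintype κ] (B : Basis κ K V)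
    (mul : V →ₗ[K] V →ₗ[K] W) :
    IsTensorDecomposition mul (fun p : κ × κ => B.coord p.1) (fun p => B.coord p.2)
      (fun p => mul (B p.1) (B p.2)) := fun x y => by
  conv_lhs => rw [← B.sum_repr x, ← B.sum_repr y]
  simp only [map_sum, LinearMap.sum_apply, map_smul, LinearMap.smul_apply, smul_smul,
    Fintype.sum_prod_type, Basis.coord_apply, Finset.smul_sum]
  rw [Finset.sum_comm]
  simp only [mul_comm]

theorem exists_isTensorDecomposition [FiniteDimensional K V] (mul : V →ₗ[K] V →ₗ[K] W) :
    ∃ (a b : Fin (finrank K V * finrank K V) → Dual K V) (z : Fin (finrank K V * finrank K V) → W),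
      IsTensorDecomposition mul a b z :=
  ⟨_, _, _, ((finBasis K V).isTensorDecomposition mul).comp_equiv finProdFinEquiv.symm⟩

theorem IsTensorDecomposition.finrank_le_card {mul : V →ₗ[K] V →ₗ[K] W} {a b : ι → Dual K V}
    {z : ι → W} (h : IsTensorDecomposition mul a b z) {x : V} (hx : Function.Surjective (mul x))
    (T : Finset ι) (hT : ∀ j ∉ T, a j x = 0) : finrank K W ≤ #T := by
  classical
  have hspan : Submodule.span K ((T.image z : Finset W) : Set W) = ⊤ := by
    refine eq_top_iff.mpr fun w _ => ?_
    obtain ⟨y, rfl⟩ := hx w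
    rw [h x y]
    refine Submodule.sum_mem _ fun j _ => ?_
    by_cases hj : j ∈ T
    · exact Submodule.smul_mem _ _ (Submodule.subset_span (by simpa using ⟨j, hj, rfl⟩))
    · simp [hT j hj]
  calc finrank K W = (T.image z : Set W).finrank K := by rw [Set.finrank, hspan, finrank_top]
    _ ≤ #(T.image z) := finrank_span_finset_le_card _
    _ ≤ #T := card_image_le

theorem IsTensorDecomposition.card_add_finrank_le [FiniteDimensional K V]
    {mul : V →ₗ[K] V →ₗ[K] W} {a b : ι → Dual K V} {z : ι → W} (h : IsTensorDecomposition mul a b z)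
    (hmul : ∀ x ≠ 0, Function.Surjective (mul x)) (S : Finset ι) (hS : #S < finrank K V) :
    #S + finrank K W ≤ Fintype.card ι := by
  classical
  obtain ⟨x, hx0, hx⟩ := exists_ne_zero_forall_dual_apply_eq_zero (fun j : S => a j)
    (by rwa [Fintype.card_coe])
  have := h.finrank_le_card (hmul x hx0) Sᶜ fun j hj => hx ⟨j, by simpa using hj⟩
  rw [card_compl] at this
  have := S.card_le_univ
  omega

end TensorDecomposition

theorem two_mul_finrank_sub_one_le_algTensorRank {K V : Type*} [Field K] [AddCommGroup V]
    [Module K V] [FiniteDimensional K V] {mul : V →ₗ[K] V →ₗ[K] V}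
    (hmul : ∀ x ≠ 0, Function.Surjective (mul x)) : 2 * finrank K V - 1 ≤ algTensorRank mul := by
  refine le_csInf ⟨_, exists_isTensorDecomposition mul⟩ ?_
  rintro R ⟨a, b, z, h : IsTensorDecomposition mul a b z⟩
  obtain ⟨S, -, hS⟩ := (univ : Finset (Fin R)).exists_subset_card_eq
    (n := min R (finrank K V - 1)) (by simp)
  have := h.card_add_finrank_le hmul S
  simp only [Fintype.card_fin] at this
  omega

theorem stmt_17_general {K L : Type*} [Field K] [Field L] [Algebra K L] :
    2 * Module.finrank K L - 1 ≤ algTensorRank (LinearMap.mul K L) := by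
  by_cases hfin : FiniteDimensional K L
  · exact two_mul_finrank_sub_one_le_algTensorRank fun x hx => mul_left_surjective₀ hx
  · simp [Module.finrank_of_not_finite hfin]

/-- The tensor rank of the multiplication tensor of the field `F_{q^n}`,
viewed as an `n`-dimensional algebra over `F_q`, is at least `2n − 1`. -/
theorem stmt_17 {K L : Type*} [Field K] [Field L] [Fintype K] [Fintype L] [Algebra K L] :
    2 * Module.finrank K L - 1 ≤ algTensorRank (LinearMap.mul K L) :=
  stmt_17_general
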